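/- arXiv:math/0509329 — 2 statements merged into one kernel-verified Lean document; each statement's English description precedes it below -/
import Mathlib

section
/- Let B ∈ L(H,K) have closed range and A ∈ L(K)⁺. For every y ∈ K there exists u ∈ H with ‖Bu − y‖_A ≤ ‖Bx − y‖_A for all x ∈ H if and only if the pair (A, R(B)) is compatible. -/
/-! A vector `u` is an `A`-least squares solution of `B x = y` iff `A (B u - y) ⊥ R(B)`, so such
solutions exist for every `y` iff `K = R(B) + A⁻¹(R(B)ᗮ)`. An idempotent `P` onto `R(B)` satisfies
`A P = P* A` iff `A (1 - P)` maps into `R(B)ᗮ`, which gives one direction. Conversely, if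
`K = S + N` with `S = R(B)` and `N = A⁻¹(Sᗮ)` closed, then `N ⊓ (S ⊓ N)ᗮ` is a closed complement
of `S`, and the projection onto `S` along it is bounded and compatible with `A`. -/

open RCLike ContinuousLinearMap
open scoped InnerProductSpace ComplexConjugate

section

variable {𝕜 E F : Type*} [RCLike 𝕜] [NormedAddCommGroup F] [InnerProductSpace 𝕜 F]

theorem LinearMap.IsSymmetric.re_inner_map_add_self {A : F →ₗ[𝕜] F} (hA : A.IsSymmetric)
    (x y : F) :
    re ⟪A (x + y), x + y⟫_𝕜 = re ⟪A x, x⟫_𝕜 + 2 * re ⟪A x, y⟫_𝕜 + re ⟪A y, y⟫_𝕜 := by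
  have hyx : re ⟪A y, x⟫_𝕜 = re ⟪A x, y⟫_𝕜 := by
    rw [hA, ← inner_conj_symm, conj_re]
  simp only [map_add, inner_add_left, inner_add_right, hyx]
  ring

theorem ContinuousLinearMap.IsPositive.forall_re_inner_le_add_iff {A : F →L[𝕜] F}
    (hA : A.IsPositive) (S : Submodule 𝕜 F) (d : F) :
    (∀ s ∈ S, re ⟪A d, d⟫_𝕜 ≤ re ⟪A (d + s), d + s⟫_𝕜) ↔ A d ∈ Sᗮ := by
  have expand := hA.isSymmetric.re_inner_map_add_self d
  simp only [coe_coe] at expand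
  constructor
  · intro hmin
    have hre : ∀ s ∈ S, re ⟪A d, s⟫_𝕜 = 0 := by
      intro s hs
      -- `t ↦ re ⟪A (d + t s), d + t s⟫` is a real quadratic polynomial minimal at `t = 0`
      have hdisc := discrim_le_zero (a := re ⟪A s, s⟫_𝕜) (b := 2 * re ⟪A d, s⟫_𝕜) (c := 0)
        fun t => by
          have := hmin ((t : 𝕜) • s) (S.smul_mem _ hs)
          simp only [expand, map_smul, inner_smul_left, inner_smul_right, conj_ofReal, mul_re,
            ofReal_re, ofReal_im, zero_mul, sub_zero] at this
          nlinarith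
      rw [discrim] at hdisc
      nlinarith
    rw [Submodule.mem_orthogonal']
    intro s hs
    have := hre (conj ⟪A d, s⟫_𝕜 • s) (S.smul_mem _ hs)
    rw [inner_smul_right, RCLike.conj_mul] at this
    norm_cast at this
    simpa using this
  · intro hd s hs
    rw [expand, (Submodule.mem_orthogonal' S _).1 hd s hs, map_zero]
    linarith [hA.re_inner_nonneg_left s]

theorem ContinuousLinearMap.IsPositive.isLeastSquaresSolution_iff [AddCommGroup E] [Module 𝕜 E]
    [TopologicalSpace E] {A : F →L[𝕜] F} (hA : A.IsPositive) (B : E →L[𝕜] F) (y : F) (u : E) :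
    (∀ x, re ⟪A (B u - y), B u - y⟫_𝕜 ≤ re ⟪A (B x - y), B x - y⟫_𝕜) ↔
      A (B u - y) ∈ B.rangeᗮ := by
  simp only [← hA.forall_re_inner_le_add_iff, LinearMap.mem_range, forall_exists_index,
    forall_apply_eq_imp_iff]
  refine ⟨fun h v => ?_, fun h x => ?_⟩
  · simpa [add_sub_right_comm] using h (u + v)
  · simpa using h (x - u)

theorem Submodule.isCompl_inf_orthogonal_inf (S N : Submodule 𝕜 F)
    [(S ⊓ N).HasOrthogonalProjection] (h : S ⊔ N = ⊤) : IsCompl S (N ⊓ (S ⊓ N)ᗮ) := by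
  refine ⟨?_, ?_⟩
  · rw [disjoint_iff, ← inf_assoc, (S ⊓ N).inf_orthogonal_eq_bot]
  · rw [codisjoint_iff, eq_top_iff, ← h]
    refine sup_le le_sup_left ?_
    calc N = S ⊓ N ⊔ (S ⊓ N)ᗮ ⊓ N :=
          (sup_orthogonal_inf_of_hasOrthogonalProjection inf_le_right).symm
      _ ≤ S ⊔ N ⊓ (S ⊓ N)ᗮ := sup_le_sup inf_le_left (inf_comm _ _).le

variable [CompleteSpace F]

theorem Submodule.exists_isIdempotentElem_range_eq_of_sup_eq_top {S N : Submodule 𝕜 F}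
    (hS : IsClosed (S : Set F)) (hN : IsClosed (N : Set F)) (h : S ⊔ N = ⊤) :
    ∃ P : F →L[𝕜] F, IsIdempotentElem P ∧ P.range = S ∧ ∀ x, x - P x ∈ N := by
  have : CompleteSpace (S ⊓ N : Submodule 𝕜 F) := (hS.inter hN).completeSpace_coe
  have hcompl : IsTopCompl S (N ⊓ (S ⊓ N)ᗮ) :=
    IsCompl.isTopCompl_of_isClosed (S.isCompl_inf_orthogonal_inf N h) hS
      (hN.inter (S ⊓ N).isClosed_orthogonal)
  refine ⟨S.projectionL _ hcompl, isIdempotentElem_projectionL hcompl,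
    range_projectionL hcompl, fun x => ?_⟩
  rw [← projectionL_eq_self_sub_projectionL]
  exact (projectionL_apply_mem hcompl.symm x).1

theorem ContinuousLinearMap.comp_eq_adjoint_comp_iff {A P : F →L[𝕜] F} (hA : IsSelfAdjoint A)
    (hP : IsIdempotentElem P) :
    A ∘L P = adjoint P ∘L A ↔ ∀ x, A (x - P x) ∈ P.rangeᗮ := by
  simp only [orthogonal_range, LinearMap.mem_ker, coe_coe, map_sub, sub_eq_zero]
  constructor
  · intro h x
    have hP' : adjoint P ∘L adjoint P = adjoint P := by
      rw [← adjoint_comp]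
      exact congrArg adjoint hP
    calc adjoint P (A x) = (adjoint P ∘L adjoint P ∘L A) x := by rw [← comp_assoc, hP']; rfl
      _ = adjoint P (A (P x)) := by rw [← h]; rfl
  · intro h
    have h' : adjoint P ∘L A = adjoint P ∘L A ∘L P := ext h
    calc A ∘L P = adjoint (adjoint P ∘L A) := by rw [adjoint_comp, adjoint_adjoint, hA.adjoint_eq]
      _ = adjoint P ∘L A := by
        rw [h', adjoint_comp, adjoint_comp, hA.adjoint_eq, adjoint_adjoint, comp_assoc, ← h']

end

theorem stmt_14_general
    {H K : Type*}
    [NormedAddCommGroup H] [InnerProductSpace ℂ H]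
    [NormedAddCommGroup K] [InnerProductSpace ℂ K] [CompleteSpace K]
    (B : H →L[ℂ] K) (hB : IsClosed (LinearMap.range (B : H →ₗ[ℂ] K) : Set K))
    (A : K →L[ℂ] K) (hA : A.IsPositive) :
    (∀ y : K, ∃ u : H, ∀ x : H,
        (inner ℂ (A (B u - y)) (B u - y) : ℂ).re ≤ (inner ℂ (A (B x - y)) (B x - y) : ℂ).re) ↔
    (∃ P : K →L[ℂ] K, P ∘L P = P ∧ LinearMap.range (P : K →ₗ[ℂ] K) = LinearMap.range (B : H →ₗ[ℂ] K) ∧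
      A ∘L P = adjoint P ∘L A) := by
  set S := LinearMap.range (B : H →ₗ[ℂ] K)
  simp only [← RCLike.re_to_complex, hA.isLeastSquaresSolution_iff B]
  constructor
  · intro h
    have hsup : S ⊔ Sᗮ.comap (A : K →ₗ[ℂ] K) = ⊤ := by
      refine eq_top_iff.2 fun y _ => ?_
      obtain ⟨u, hu⟩ := h y
      refine Submodule.mem_sup.2 ⟨B u, ⟨u, rfl⟩, y - B u, ?_, add_sub_cancel _ _⟩
      rw [Submodule.mem_comap, coe_coe, ← neg_sub, map_neg]
      exact Sᗮ.neg_mem hu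
    obtain ⟨P, hP, hPS, hPN⟩ := Submodule.exists_isIdempotentElem_range_eq_of_sup_eq_top hB
      (S.isClosed_orthogonal.preimage A.continuous) hsup
    exact ⟨P, hP, hPS, (comp_eq_adjoint_comp_iff hA.isSelfAdjoint hP).2 fun x => hPS ▸ hPN x⟩
  · rintro ⟨P, hP, hPS, hAP⟩ y
    obtain ⟨u, hu : B u = P y⟩ : P y ∈ S := hPS ▸ ⟨y, rfl⟩
    refine ⟨u, ?_⟩
    have hy : A (y - P y) ∈ Sᗮ := hPS ▸ (comp_eq_adjoint_comp_iff hA.isSelfAdjoint hP).1 hAP y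
    rw [hu, ← neg_sub, map_neg, Submodule.neg_mem_iff]
    exact hy

theorem stmt_14
    {H K : Type*}
    [NormedAddCommGroup H] [InnerProductSpace ℂ H] [CompleteSpace H]
    [NormedAddCommGroup K] [InnerProductSpace ℂ K] [CompleteSpace K]
    (B : H →L[ℂ] K) (hB : IsClosed (LinearMap.range (B : H →ₗ[ℂ] K) : Set K))
    (A : K →L[ℂ] K) (hA : A.IsPositive) :
    (∀ y : K, ∃ u : H, ∀ x : H,
        (inner ℂ (A (B u - y)) (B u - y) : ℂ).re ≤ (inner ℂ (A (B x - y)) (B x - y) : ℂ).re) ↔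
    (∃ P : K →L[ℂ] K, P ∘L P = P ∧ LinearMap.range (P : K →ₗ[ℂ] K) = LinearMap.range (B : H →ₗ[ℂ] K) ∧
      A ∘L P = adjoint P ∘L A) :=
  stmt_14_general B hB A hA
end

section
/- Let B ∈ L(H,K), A ∈ L(H)⁺ with (A, N(B)) compatible, and let x₀ ∈ N(B)^⊥, x₀ ≠ 0. For u ∈ x₀ + N(B), one has ‖u‖_A ≤ ‖x‖_A for every x ∈ x₀ + N(B) if and only if there exists Q ∈ P(A, N(B)) with u = (I − Q)x₀. -/
open ContinuousLinearMap

/-- `P(A,S)`: the set of `A`-Hermitian bounded projections with range `S`. -/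
def PAS {H : Type*} [NormedAddCommGroup H] [InnerProductSpace ℂ H] [CompleteSpace H]
    (A : H →L[ℂ] H) (S : Submodule ℂ H) : Set (H →L[ℂ] H) :=
  {Q | Q ∘L Q = Q ∧ LinearMap.range (Q : H →ₗ[ℂ] H) = S ∧ A ∘L Q = adjoint Q ∘L A}

/-!
On a coset `v + S`, the form `q x = re ⟪A x, x⟫` of a positive operator is minimal exactly at the
points `v` with `A v ⟂ S`: the first variation along `S` must vanish and the second one is `q ≥ 0`.
For `Q ∈ P(A, S)` the vector `A (x₀ - Q x₀)` is orthogonal to `S`, since `AQ = Q*A` and `Q` fixes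
`S`. Conversely, if `u` is a minimiser and `Q₀ ∈ P(A, S)`, then `w = u - (x₀ - Q₀ x₀) ∈ S` has
`A w ⟂ S`, so `q w = 0` and hence `A w = 0`. As `x₀ ⟂ S`, the rank-one correction
`Q = Q₀ - ⟪x₀, ·⟫ / ‖x₀‖² • w` still lies in `P(A, S)`, and `x₀ - Q x₀ = u`.
-/

open RCLike ComplexConjugate
open scoped InnerProductSpace

namespace ContinuousLinearMap

variable {𝕜 E : Type*} [RCLike 𝕜] [NormedAddCommGroup E] [InnerProductSpace 𝕜 E] {T : E →L[𝕜] E}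

theorem reApplyInnerSelf_add (hT : (T : E →ₗ[𝕜] E).IsSymmetric) (x y : E) :
    T.reApplyInnerSelf (x + y) =
      T.reApplyInnerSelf x + 2 * re ⟪T x, y⟫_𝕜 + T.reApplyInnerSelf y := by
  have hyx : re ⟪T y, x⟫_𝕜 = re ⟪T x, y⟫_𝕜 := by
    rw [show ⟪T y, x⟫_𝕜 = ⟪y, T x⟫_𝕜 from hT y x, inner_re_symm]
  simp only [reApplyInnerSelf_apply, map_add, inner_add_left, inner_add_right, hyx]
  ring

theorem IsPositive.isMinOn_coset_iff (hT : T.IsPositive) {S : Submodule 𝕜 E} {x₀ v : E}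
    (hv : v - x₀ ∈ S) :
    IsMinOn T.reApplyInnerSelf {x | x - x₀ ∈ S} v ↔ ∀ s ∈ S, ⟪T v, s⟫_𝕜 = 0 := by
  have hcoset : ∀ s, v + s - x₀ ∈ S ↔ s ∈ S := fun s => by
    rw [add_sub_right_comm, S.add_mem_iff_right hv]
  rw [isMinOn_iff]
  constructor
  · intro hmin s hs
    set γ := ⟪T v, s⟫_𝕜
    -- Moving from `v` along the real line through `conj γ • s` changes the form by a quadratic
    -- polynomial whose linear coefficient is `2 ‖γ‖²`.
    have hquad : ∀ t : ℝ,
        0 ≤ T.reApplyInnerSelf (conj γ • s) * (t * t) + 2 * ‖γ‖ ^ 2 * t + 0 := by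
      intro t
      have h := hmin (v + (t : 𝕜) • conj γ • s) ((hcoset _).2 (S.smul_mem _ (S.smul_mem _ hs)))
      rw [reApplyInnerSelf_add hT.isSymmetric, reApplyInnerSelf_smul, inner_smul_right,
        inner_smul_right, RCLike.conj_mul, ← ofReal_pow, ← ofReal_mul, ofReal_re, norm_ofReal,
        sq_abs] at h
      linarith
    have hdisc := discrim_le_zero hquad
    rw [discrim] at hdisc
    exact norm_eq_zero.1 (pow_eq_zero_iff two_ne_zero |>.1 (by nlinarith [sq_nonneg (‖γ‖ ^ 2)]))
  · intro horth x hx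
    have hxv : x - v ∈ S := by simpa using S.sub_mem hx hv
    rw [← add_sub_cancel v x, reApplyInnerSelf_add hT.isSymmetric, horth _ hxv, map_zero,
      mul_zero, add_zero]
    exact le_add_of_nonneg_right (hT.2 _)

theorem IsPositive.apply_eq_zero_of_reApplyInnerSelf_eq_zero (hT : T.IsPositive) {x : E}
    (hx : T.reApplyInnerSelf x = 0) : T x = 0 := by
  have hmin : IsMinOn T.reApplyInnerSelf {y | y - x ∈ (⊤ : Submodule 𝕜 E)} x :=
    isMinOn_iff.2 fun y _ => hx ▸ hT.2 y
  exact inner_self_eq_zero.1 ((hT.isMinOn_coset_iff (by simp)).1 hmin _ trivial)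

end ContinuousLinearMap

section PAS

variable {H : Type*} [NormedAddCommGroup H] [InnerProductSpace ℂ H] [CompleteSpace H]
  {A Q : H →L[ℂ] H} {S : Submodule ℂ H}

theorem apply_eq_self_of_mem_PAS (hQ : Q ∈ PAS A S) {x : H} (hx : x ∈ S) : Q x = x := by
  obtain ⟨y, rfl⟩ : x ∈ LinearMap.range (Q : H →ₗ[ℂ] H) := hQ.2.1 ▸ hx
  exact congr($(hQ.1) y)

theorem apply_mem_of_mem_PAS (hQ : Q ∈ PAS A S) (x : H) : Q x ∈ S :=
  hQ.2.1 ▸ LinearMap.mem_range_self (Q : H →ₗ[ℂ] H) x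

theorem inner_apply_sub_apply_eq_zero_of_mem_PAS (hQ : Q ∈ PAS A S) (x : H) {s : H}
    (hs : s ∈ S) : ⟪A (x - Q x), s⟫_ℂ = 0 := by
  have hAQ : ⟪A (Q x), s⟫_ℂ = ⟪A x, s⟫_ℂ := by
    rw [← comp_apply, hQ.2.2, comp_apply, adjoint_inner_left, apply_eq_self_of_mem_PAS hQ hs]
  rw [map_sub, inner_sub_left, hAQ, sub_self]

theorem add_mem_PAS (hQ : Q ∈ PAS A S) (hA : IsSelfAdjoint A) {Z : H →L[ℂ] H}
    (hZS : ∀ x, Z x ∈ S) (hZ : ∀ s ∈ S, Z s = 0) (hAZ : A ∘L Z = 0) : Q + Z ∈ PAS A S := by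
  have hQS := apply_mem_of_mem_PAS hQ
  refine ⟨?_, ?_, ?_⟩
  · ext x
    simp only [comp_apply, add_apply, map_add, apply_eq_self_of_mem_PAS hQ (hQS x),
      apply_eq_self_of_mem_PAS hQ (hZS x), hZ _ (hQS x), hZ _ (hZS x), add_zero]
  · refine le_antisymm ?_ fun s hs => ⟨s, ?_⟩
    · rintro _ ⟨x, rfl⟩
      exact S.add_mem (hQS x) (hZS x)
    · simp [apply_eq_self_of_mem_PAS hQ hs, hZ s hs]
  · have hZA : adjoint Z ∘L A = 0 := by
      rw [← hA.adjoint_eq, ← adjoint_comp, hAZ, map_zero]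
    rw [comp_add, map_add, add_comp, hAZ, hZA, hQ.2.2]

end PAS

theorem stmt_17
    {H K : Type*}
    [NormedAddCommGroup H] [InnerProductSpace ℂ H] [CompleteSpace H]
    [NormedAddCommGroup K] [InnerProductSpace ℂ K] [CompleteSpace K]
    (B : H →L[ℂ] K)
    (A : H →L[ℂ] H) (hA : A.IsPositive)
    (hcompat : (PAS A (LinearMap.ker (B : H →ₗ[ℂ] K))).Nonempty)
    (x₀ : H) (hx₀ : x₀ ∈ (LinearMap.ker (B : H →ₗ[ℂ] K))ᗮ) (hx₀ne : x₀ ≠ 0)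
    (u : H) (hu : u - x₀ ∈ LinearMap.ker (B : H →ₗ[ℂ] K)) :
    (∀ x : H, x - x₀ ∈ LinearMap.ker (B : H →ₗ[ℂ] K) →
        (inner ℂ (A u) u : ℂ).re ≤ (inner ℂ (A x) x : ℂ).re) ↔
    (∃ Q ∈ PAS A (LinearMap.ker (B : H →ₗ[ℂ] K)), u = x₀ - Q x₀) := by
  set N := LinearMap.ker (B : H →ₗ[ℂ] K)
  refine (isMinOn_iff.symm.trans (hA.isMinOn_coset_iff hu)).trans ⟨fun hAu => ?_, ?_⟩
  · obtain ⟨Q₀, hQ₀⟩ := hcompat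
    have hwN : u - (x₀ - Q₀ x₀) ∈ N := by
      rw [sub_sub_eq_add_sub, add_sub_right_comm]
      exact N.add_mem hu (apply_mem_of_mem_PAS hQ₀ x₀)
    have hAw : A (u - (x₀ - Q₀ x₀)) = 0 := by
      refine hA.apply_eq_zero_of_reApplyInnerSelf_eq_zero ?_
      rw [reApplyInnerSelf_apply, map_sub, inner_sub_left, hAu _ hwN,
        inner_apply_sub_apply_eq_zero_of_mem_PAS hQ₀ x₀ hwN, sub_self, map_zero]
    set w := u - (x₀ - Q₀ x₀) with hw
    set Z : H →L[ℂ] H := (-(⟪x₀, x₀⟫_ℂ)⁻¹ • innerSL ℂ x₀).smulRight w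
    have hZ : ∀ x, Z x = -((⟪x₀, x₀⟫_ℂ)⁻¹ * ⟪x₀, x⟫_ℂ) • w := fun x => by simp [Z]
    refine ⟨Q₀ + Z, add_mem_PAS hQ₀ hA.isSelfAdjoint (fun x => ?_) (fun s hs => ?_) ?_, ?_⟩
    · rw [hZ]
      exact N.smul_mem _ hwN
    · rw [hZ, (N.mem_orthogonal' x₀).1 hx₀ s hs, mul_zero, neg_zero, zero_smul]
    · ext x
      simp [hZ, hAw]
    · rw [add_apply, hZ, inv_mul_cancel₀ (inner_self_ne_zero.2 hx₀ne), neg_smul, one_smul, hw]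
      abel
  · rintro ⟨Q, hQ, rfl⟩ n hn
    exact inner_apply_sub_apply_eq_zero_of_mem_PAS hQ x₀ hn
end
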